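/- arXiv:1305.3030 — 2 statements merged into one kernel-verified Lean document; each statement's English description precedes it below -/
import Mathlib

section
/- The R-matrix of the one-parameter family of five vertex models satisfies the Yang–Baxter equation: for all nonzero complex numbers u, v, w with u², v², w² pairwise distinct, R₁₂(u,v) R₁₃(u,w) R₂₃(v,w) = R₂₃(v,w) R₁₃(u,w) R₁₂(u,v) as endomorphisms of ℂ²⊗ℂ²⊗ℂ², where the subscripts indicate the pair of tensor factors on which R acts (identity on the remaining factor). -/
open Matrix
open scoped Kronecker BigOperators

noncomputable section

/-- Boltzmann weight `f(v,u) = u²/(u²−v²)`. -/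
def fF (v u : ℂ) : ℂ := u ^ 2 / (u ^ 2 - v ^ 2)

/-- Boltzmann weight `g(v,u) = uv/(u²−v²)`. -/
def gF (v u : ℂ) : ℂ := u * v / (u ^ 2 - v ^ 2)

def sM : Matrix (Fin 2) (Fin 2) ℂ := !![1, 0; 0, 0]
def nM : Matrix (Fin 2) (Fin 2) ℂ := !![0, 0; 0, 1]
def sigP : Matrix (Fin 2) (Fin 2) ℂ := !![0, 1; 0, 0]
def sigM : Matrix (Fin 2) (Fin 2) ℂ := !![0, 0; 1, 0]

/-- The R-matrix of the five vertex model on ℂ²⊗ℂ², with basis ordered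
`|00⟩,|01⟩,|10⟩,|11⟩` (encoded as pairs in `Fin 2 × Fin 2`):
`R(u,v) = [[f(v,u),0,0,0],[0,0,g(v,u),0],[0,g(v,u),1,0],[0,0,0,f(v,u)]]`. -/
def Rmat (u v : ℂ) : Matrix (Fin 2 × Fin 2) (Fin 2 × Fin 2) ℂ :=
  fF v u • (sM ⊗ₖ sM) + gF v u • (sigP ⊗ₖ sigM) + gF v u • (sigM ⊗ₖ sigP)
    + nM ⊗ₖ sM + fF v u • (nM ⊗ₖ nM)

/-- Embed an operator on ℂ²⊗ℂ² into ℂ²⊗ℂ²⊗ℂ², acting on tensor factors 1 and 2. -/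
def op12 (X : Matrix (Fin 2 × Fin 2) (Fin 2 × Fin 2) ℂ) :
    Matrix (Fin 2 × Fin 2 × Fin 2) (Fin 2 × Fin 2 × Fin 2) ℂ :=
  fun p q => X (p.1, p.2.1) (q.1, q.2.1) * (if p.2.2 = q.2.2 then 1 else 0)

/-- Embed an operator on ℂ²⊗ℂ² into ℂ²⊗ℂ²⊗ℂ², acting on tensor factors 1 and 3. -/
def op13 (X : Matrix (Fin 2 × Fin 2) (Fin 2 × Fin 2) ℂ) :
    Matrix (Fin 2 × Fin 2 × Fin 2) (Fin 2 × Fin 2 × Fin 2) ℂ :=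
  fun p q => X (p.1, p.2.2) (q.1, q.2.2) * (if p.2.1 = q.2.1 then 1 else 0)

/-- Embed an operator on ℂ²⊗ℂ² into ℂ²⊗ℂ²⊗ℂ², acting on tensor factors 2 and 3. -/
def op23 (X : Matrix (Fin 2 × Fin 2) (Fin 2 × Fin 2) ℂ) :
    Matrix (Fin 2 × Fin 2 × Fin 2) (Fin 2 × Fin 2 × Fin 2) ℂ :=
  fun p q => X (p.2.1, p.2.2) (q.2.1, q.2.2) * (if p.1 = q.1 then 1 else 0)

def rE (u v : ℂ) : Fin 2 → Fin 2 → Fin 2 → Fin 2 → ℂ :=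
  ![![![![fF v u, 0], ![0, 0]], ![![0, 0], ![gF v u, 0]]],
    ![![![0, gF v u], ![1, 0]], ![![0, 0], ![0, fF v u]]]]

lemma Rmat_apply (u v : ℂ) (a b c d : Fin 2) :
    Rmat u v (a, b) (c, d) = rE u v a b c d := by
  fin_cases a <;> fin_cases b <;> fin_cases c <;> fin_cases d <;>
    simp [Rmat, rE, sM, nM, sigP, sigM, Matrix.kroneckerMap_apply]

set_option maxHeartbeats 4000000 in
/-- The R-matrix of the five vertex model satisfies the Yang–Baxter
equation `R₁₂(u,v) R₁₃(u,w) R₂₃(v,w) = R₂₃(v,w) R₁₃(u,w) R₁₂(u,v)`. -/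
theorem yang_baxter (u v w : ℂ) (hu : u ≠ 0) (hv : v ≠ 0) (hw : w ≠ 0)
    (huv : u ^ 2 ≠ v ^ 2) (huw : u ^ 2 ≠ w ^ 2) (hvw : v ^ 2 ≠ w ^ 2) :
    op12 (Rmat u v) * op13 (Rmat u w) * op23 (Rmat v w) =
      op23 (Rmat v w) * op13 (Rmat u w) * op12 (Rmat u v) := by
  have h1 : u ^ 2 - v ^ 2 ≠ 0 := sub_ne_zero.mpr huv
  have h2 : u ^ 2 - w ^ 2 ≠ 0 := sub_ne_zero.mpr huw
  have h3 : v ^ 2 - w ^ 2 ≠ 0 := sub_ne_zero.mpr hvw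
  ext ⟨a, b, c⟩ ⟨d, e, f⟩
  simp only [Matrix.mul_apply, op12, op13, op23, Rmat_apply, Fintype.sum_prod_type,
    Fin.sum_univ_two]
  fin_cases a <;> fin_cases b <;> fin_cases c <;> fin_cases d <;> fin_cases e <;> fin_cases f <;>
    simp [rE] <;> simp only [fF, gF] <;> (try ring1) <;> (field_simp; ring)

end
end

section
/- The L-operator of the one-parameter family of five vertex models satisfies the RLL-relation: for every α ∈ ℂ and all nonzero complex numbers u, v with u² ≠ v², one has R₁₂(u,v) L₁₃(u) L₂₃(v) = L₂₃(v) L₁₃(u) R₁₂(u,v) as endomorphisms of ℂ²⊗ℂ²⊗ℂ², where R acts on the first two tensor factors, L₁₃(u) acts on factors 1 and 3, and L₂₃(v) acts on factors 2 and 3. -/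
open Matrix
open scoped Kronecker BigOperators

noncomputable section

/-- The L-operator of the one-parameter family of five vertex models:
`L(u) = u·s⊗s + σ⁻⊗σ⁺ + σ⁺⊗σ⁻ + (αu−u⁻¹)·n⊗s + αu·n⊗n`. -/
def Lmat (α u : ℂ) : Matrix (Fin 2 × Fin 2) (Fin 2 × Fin 2) ℂ :=
  u • (sM ⊗ₖ sM) + sigM ⊗ₖ sigP + sigP ⊗ₖ sigM + (α * u - u⁻¹) • (nM ⊗ₖ sM)
    + (α * u) • (nM ⊗ₖ nM)

@[simp] lemma Rmat_e_0000 (u v : ℂ) : Rmat u v (0,0) (0,0) = fF v u := by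
  simp [Rmat, fF, gF, sM, nM, sigP, sigM]

@[simp] lemma Lmat_e_0000 (α u : ℂ) : Lmat α u (0,0) (0,0) = u := by
  simp [Lmat, sM, nM, sigP, sigM]

@[simp] lemma Rmat_e_0001 (u v : ℂ) : Rmat u v (0,0) (0,1) = 0 := by
  simp [Rmat, fF, gF, sM, nM, sigP, sigM]

@[simp] lemma Lmat_e_0001 (α u : ℂ) : Lmat α u (0,0) (0,1) = 0 := by
  simp [Lmat, sM, nM, sigP, sigM]

@[simp] lemma Rmat_e_0010 (u v : ℂ) : Rmat u v (0,0) (1,0) = 0 := by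
  simp [Rmat, fF, gF, sM, nM, sigP, sigM]

@[simp] lemma Lmat_e_0010 (α u : ℂ) : Lmat α u (0,0) (1,0) = 0 := by
  simp [Lmat, sM, nM, sigP, sigM]

@[simp] lemma Rmat_e_0011 (u v : ℂ) : Rmat u v (0,0) (1,1) = 0 := by
  simp [Rmat, fF, gF, sM, nM, sigP, sigM]

@[simp] lemma Lmat_e_0011 (α u : ℂ) : Lmat α u (0,0) (1,1) = 0 := by
  simp [Lmat, sM, nM, sigP, sigM]

@[simp] lemma Rmat_e_0100 (u v : ℂ) : Rmat u v (0,1) (0,0) = 0 := by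
  simp [Rmat, fF, gF, sM, nM, sigP, sigM]

@[simp] lemma Lmat_e_0100 (α u : ℂ) : Lmat α u (0,1) (0,0) = 0 := by
  simp [Lmat, sM, nM, sigP, sigM]

@[simp] lemma Rmat_e_0101 (u v : ℂ) : Rmat u v (0,1) (0,1) = 0 := by
  simp [Rmat, fF, gF, sM, nM, sigP, sigM]

@[simp] lemma Lmat_e_0101 (α u : ℂ) : Lmat α u (0,1) (0,1) = 0 := by
  simp [Lmat, sM, nM, sigP, sigM]

@[simp] lemma Rmat_e_0110 (u v : ℂ) : Rmat u v (0,1) (1,0) = gF v u := by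
  simp [Rmat, fF, gF, sM, nM, sigP, sigM]

@[simp] lemma Lmat_e_0110 (α u : ℂ) : Lmat α u (0,1) (1,0) = 1 := by
  simp [Lmat, sM, nM, sigP, sigM]

@[simp] lemma Rmat_e_0111 (u v : ℂ) : Rmat u v (0,1) (1,1) = 0 := by
  simp [Rmat, fF, gF, sM, nM, sigP, sigM]

@[simp] lemma Lmat_e_0111 (α u : ℂ) : Lmat α u (0,1) (1,1) = 0 := by
  simp [Lmat, sM, nM, sigP, sigM]

@[simp] lemma Rmat_e_1000 (u v : ℂ) : Rmat u v (1,0) (0,0) = 0 := by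
  simp [Rmat, fF, gF, sM, nM, sigP, sigM]

@[simp] lemma Lmat_e_1000 (α u : ℂ) : Lmat α u (1,0) (0,0) = 0 := by
  simp [Lmat, sM, nM, sigP, sigM]

@[simp] lemma Rmat_e_1001 (u v : ℂ) : Rmat u v (1,0) (0,1) = gF v u := by
  simp [Rmat, fF, gF, sM, nM, sigP, sigM]

@[simp] lemma Lmat_e_1001 (α u : ℂ) : Lmat α u (1,0) (0,1) = 1 := by
  simp [Lmat, sM, nM, sigP, sigM]

@[simp] lemma Rmat_e_1010 (u v : ℂ) : Rmat u v (1,0) (1,0) = 1 := by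
  simp [Rmat, fF, gF, sM, nM, sigP, sigM]

@[simp] lemma Lmat_e_1010 (α u : ℂ) : Lmat α u (1,0) (1,0) = α * u - u⁻¹ := by
  simp [Lmat, sM, nM, sigP, sigM]

@[simp] lemma Rmat_e_1011 (u v : ℂ) : Rmat u v (1,0) (1,1) = 0 := by
  simp [Rmat, fF, gF, sM, nM, sigP, sigM]

@[simp] lemma Lmat_e_1011 (α u : ℂ) : Lmat α u (1,0) (1,1) = 0 := by
  simp [Lmat, sM, nM, sigP, sigM]

@[simp] lemma Rmat_e_1100 (u v : ℂ) : Rmat u v (1,1) (0,0) = 0 := by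
  simp [Rmat, fF, gF, sM, nM, sigP, sigM]

@[simp] lemma Lmat_e_1100 (α u : ℂ) : Lmat α u (1,1) (0,0) = 0 := by
  simp [Lmat, sM, nM, sigP, sigM]

@[simp] lemma Rmat_e_1101 (u v : ℂ) : Rmat u v (1,1) (0,1) = 0 := by
  simp [Rmat, fF, gF, sM, nM, sigP, sigM]

@[simp] lemma Lmat_e_1101 (α u : ℂ) : Lmat α u (1,1) (0,1) = 0 := by
  simp [Lmat, sM, nM, sigP, sigM]

@[simp] lemma Rmat_e_1110 (u v : ℂ) : Rmat u v (1,1) (1,0) = 0 := by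
  simp [Rmat, fF, gF, sM, nM, sigP, sigM]

@[simp] lemma Lmat_e_1110 (α u : ℂ) : Lmat α u (1,1) (1,0) = 0 := by
  simp [Lmat, sM, nM, sigP, sigM]

@[simp] lemma Rmat_e_1111 (u v : ℂ) : Rmat u v (1,1) (1,1) = fF v u := by
  simp [Rmat, fF, gF, sM, nM, sigP, sigM]

@[simp] lemma Lmat_e_1111 (α u : ℂ) : Lmat α u (1,1) (1,1) = α * u := by
  simp [Lmat, sM, nM, sigP, sigM]

set_option maxHeartbeats 4000000 in
/-- The L-operator satisfies the RLL-relation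
`R₁₂(u,v) L₁₃(u) L₂₃(v) = L₂₃(v) L₁₃(u) R₁₂(u,v)`. -/
theorem RLL_relation (α : ℂ) (u v : ℂ) (hu : u ≠ 0) (hv : v ≠ 0)
    (huv : u ^ 2 ≠ v ^ 2) :
    op12 (Rmat u v) * op13 (Lmat α u) * op23 (Lmat α v) =
      op23 (Lmat α v) * op13 (Lmat α u) * op12 (Rmat u v) := by
  have h2 : u ^ 2 - v ^ 2 ≠ 0 := sub_ne_zero.mpr huv
  ext ⟨a, b, c⟩ ⟨d, e, f⟩
  fin_cases a <;> fin_cases b <;> fin_cases c <;> fin_cases d <;> fin_cases e <;> fin_cases f <;>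
  · simp only [Matrix.mul_apply, Fintype.sum_prod_type, Fin.sum_univ_two, op12, op13, op23,
      Rmat_e_0000, Rmat_e_0001, Rmat_e_0010, Rmat_e_0011, Rmat_e_0100, Rmat_e_0101,
      Rmat_e_0110, Rmat_e_0111, Rmat_e_1000, Rmat_e_1001, Rmat_e_1010, Rmat_e_1011,
      Rmat_e_1100, Rmat_e_1101, Rmat_e_1110, Rmat_e_1111,
      Lmat_e_0000, Lmat_e_0001, Lmat_e_0010, Lmat_e_0011, Lmat_e_0100, Lmat_e_0101,
      Lmat_e_0110, Lmat_e_0111, Lmat_e_1000, Lmat_e_1001, Lmat_e_1010, Lmat_e_1011,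
      Lmat_e_1100, Lmat_e_1101, Lmat_e_1110, Lmat_e_1111,
      Fin.reduceEq, reduceIte, if_true, mul_one, mul_zero, zero_mul, one_mul,
      add_zero, zero_add, Fin.mk_zero, Fin.mk_one, fF, gF]
    try field_simp
    try ring

end
end
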